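/- The sequence of functions g_n(r) = L_{n−1}^{(2ν)}(2aβr)², n ≥ 1, satisfies the mixed shift-differential relation: −nr·(d/dr)g_{n+1}(r) + 2n²·g_{n+1}(r) + (−nr − 2νr)·(d/dr)g_n(r) + (4aβnr + 8aβνr − 8ν² − 2n² − 8νn)·g_n(r) = 0 for all real r. -/

import Mathlib

/-!
The coefficient of `x ^ k` in `L_m^{(α)}` is `(-1) ^ k / k! * choose (m + α) (m - k)`, so the
absorption identity and Pascal's rule for these generalized binomial coefficients give
`x L'_{m+1} = (m + 1) L_{m+1} - (m + 1 + α) L_m` and `L'_{m+1} = L'_m - L_m`, hence also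
`x L'_m = (m + 1) L_{m+1} + (x - m - 1 - α) L_m`. Since `r g'(r) = 2 L(x) · x L'(x)` at
`x = 2aβr`, with `α = 2ν` the relation is `2n L_n` times the first identity plus `2(n + α) L_{n-1}`
times the third.
-/

noncomputable def laguerreL (n : ℕ) (a x : ℝ) : ℝ :=
  ∑ k ∈ Finset.range (n + 1), (-1 : ℝ) ^ k *
    ((∏ i ∈ Finset.range (n - k), ((n : ℝ) + a - i)) / (Nat.factorial (n - k))) *
    x ^ k / (Nat.factorial k)

open Finset

lemma prod_range_sub_div_factorial_eq_choose {K : Type*} [Field K] [CharZero K] (x : K) (j : ℕ) :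
    (∏ i ∈ range j, (x - i)) / j.factorial = Ring.choose x j := by
  rw [Ring.choose_eq_smul, ← Polynomial.aeval_eq_smeval, Polynomial.aeval_def,
    Polynomial.eval₂_eq_eval_map, descPochhammer_map, descPochhammer_eval_eq_prod_range,
    smul_eq_mul, div_eq_inv_mul]

lemma Ring.succ_smul_choose_succ_succ {R : Type*} [CommRing R] [BinomialRing R] (r : R) (j : ℕ) :
    (j + 1) • Ring.choose (r + 1) (j + 1) = (r + 1) * Ring.choose r j := by
  simpa [Ring.choose_one_right] using Ring.choose_smul_choose (r + 1) (Nat.le_add_left 1 j)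

theorem hasDerivAt_sum_range_mul_pow {𝕜 : Type*} [NontriviallyNormedField 𝕜] (c : ℕ → 𝕜)
    (N : ℕ) (x : 𝕜) :
    HasDerivAt (fun y => ∑ k ∈ range (N + 1), c k * y ^ k)
      (∑ k ∈ range N, (k + 1) * c (k + 1) * x ^ k) x := by
  refine (HasDerivAt.fun_sum fun k _ => (hasDerivAt_pow k x).const_mul (c k)).congr_deriv ?_
  rw [sum_range_succ']
  simp only [Nat.cast_zero, zero_mul, mul_zero, add_zero, Nat.add_sub_cancel, Nat.cast_succ]
  exact sum_congr rfl fun k _ => by ring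

theorem mul_deriv_sq_comp_const_mul {𝕜 : Type*} [NontriviallyNormedField 𝕜] {f : 𝕜 → 𝕜}
    {c r : 𝕜} (hf : DifferentiableAt 𝕜 f (c * r)) :
    r * deriv (fun s => f (c * s) ^ 2) r = 2 * f (c * r) * (c * r * deriv f (c * r)) := by
  have h : HasDerivAt (fun s => f (c * s) ^ 2) (2 * f (c * r) * (deriv f (c * r) * c)) r := by
    simpa using (hf.hasDerivAt.comp r ((hasDerivAt_id r).const_mul c)).fun_pow 2
  rw [h.deriv]
  ring

noncomputable def laguerreCoeff (n : ℕ) (a : ℝ) (k : ℕ) : ℝ :=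
  (-1) ^ k * Ring.choose ((n : ℝ) + a) (n - k) / k.factorial

section

variable (a : ℝ)

lemma sub_mul_laguerreCoeff_succ {m k : ℕ} (hk : k ≤ m) :
    ((m : ℝ) + 1 - k) * laguerreCoeff (m + 1) a k = ((m : ℝ) + 1 + a) * laguerreCoeff m a k := by
  obtain ⟨j, rfl⟩ := Nat.exists_eq_add_of_le hk
  have h := Ring.succ_smul_choose_succ_succ (((k + j : ℕ) : ℝ) + a) j
  rw [nsmul_eq_mul] at h
  unfold laguerreCoeff
  rw [show k + j + 1 - k = j + 1 by omega, Nat.add_sub_cancel_left, Nat.cast_succ (k + j),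
    add_right_comm _ (1 : ℝ) a]
  push_cast at h ⊢
  linear_combination (-1) ^ k / (k.factorial : ℝ) * h

lemma succ_mul_laguerreCoeff_succ_self (m : ℕ) :
    ((m : ℝ) + 1) * laguerreCoeff (m + 1) a (m + 1) = -laguerreCoeff m a m := by
  unfold laguerreCoeff
  rw [Nat.sub_self, Nat.sub_self, Ring.choose_zero_right, Ring.choose_zero_right,
    Nat.factorial_succ, pow_succ]
  push_cast
  field_simp

lemma laguerreCoeff_succ_pascal {m k : ℕ} (hk : k < m) :
    ((k : ℝ) + 1) * laguerreCoeff (m + 1) a (k + 1) + laguerreCoeff m a k =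
      ((k : ℝ) + 1) * laguerreCoeff m a (k + 1) := by
  obtain ⟨j, rfl⟩ := Nat.exists_eq_add_of_lt hk
  have h := Ring.choose_succ_succ (((k + j + 1 : ℕ) : ℝ) + a) j
  unfold laguerreCoeff
  rw [show k + j + 1 + 1 - (k + 1) = j + 1 by omega, show k + j + 1 - k = j + 1 by omega,
    show k + j + 1 - (k + 1) = j by omega, Nat.cast_succ (k + j + 1),
    add_right_comm _ (1 : ℝ) a, Nat.factorial_succ, pow_succ]
  push_cast at h ⊢
  field_simp
  linear_combination -h

lemma laguerreL_eq_sum (n : ℕ) (x : ℝ) :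
    laguerreL n a x = ∑ k ∈ range (n + 1), laguerreCoeff n a k * x ^ k := by
  refine sum_congr rfl fun k _ => ?_
  rw [laguerreCoeff, ← prod_range_sub_div_factorial_eq_choose]
  ring

lemma hasDerivAt_laguerreL (n : ℕ) (x : ℝ) :
    HasDerivAt (laguerreL n a) (∑ k ∈ range n, (k + 1) * laguerreCoeff n a (k + 1) * x ^ k) x := by
  rw [show laguerreL n a = _ from funext (laguerreL_eq_sum a n)]
  exact hasDerivAt_sum_range_mul_pow _ n x

lemma deriv_laguerreL (n : ℕ) (x : ℝ) :
    deriv (laguerreL n a) x = ∑ k ∈ range n, (k + 1) * laguerreCoeff n a (k + 1) * x ^ k :=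
  (hasDerivAt_laguerreL a n x).deriv

lemma deriv_laguerreL_succ (m : ℕ) (x : ℝ) :
    deriv (laguerreL (m + 1) a) x = deriv (laguerreL m a) x - laguerreL m a x := by
  have hterm : ∀ k ∈ range m, (k + 1) * laguerreCoeff (m + 1) a (k + 1) * x ^ k =
      (k + 1) * laguerreCoeff m a (k + 1) * x ^ k - laguerreCoeff m a k * x ^ k := fun k hk =>
    by linear_combination x ^ k * laguerreCoeff_succ_pascal a (mem_range.mp hk)
  rw [deriv_laguerreL, deriv_laguerreL, laguerreL_eq_sum, sum_range_succ, sum_range_succ _ m,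
    sum_congr rfl hterm, sum_sub_distrib]
  linear_combination x ^ m * succ_mul_laguerreCoeff_succ_self a m

lemma mul_deriv_laguerreL_succ (m : ℕ) (x : ℝ) :
    x * deriv (laguerreL (m + 1) a) x =
      (m + 1) * laguerreL (m + 1) a x - (m + 1 + a) * laguerreL m a x := by
  have euler : x * deriv (laguerreL (m + 1) a) x =
      ∑ k ∈ range (m + 2), k * laguerreCoeff (m + 1) a k * x ^ k := by
    rw [deriv_laguerreL, mul_sum, sum_range_succ' _ (m + 1)]
    simp only [Nat.cast_zero, zero_mul, add_zero, Nat.cast_succ, pow_succ]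
    exact sum_congr rfl fun k _ => by ring
  have absorb : (m + 1 + a) * laguerreL m a x =
      ∑ k ∈ range (m + 2), (m + 1 - k) * laguerreCoeff (m + 1) a k * x ^ k := by
    rw [laguerreL_eq_sum, mul_sum, sum_range_succ _ (m + 1)]
    simp only [Nat.cast_succ, sub_self, zero_mul, add_zero]
    exact sum_congr rfl fun k hk => by
      linear_combination (-x ^ k) * sub_mul_laguerreCoeff_succ a (mem_range_succ_iff.mp hk)
  rw [euler, absorb, laguerreL_eq_sum, mul_sum, ← sum_sub_distrib]
  exact sum_congr rfl fun k _ => by ring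

lemma mul_deriv_laguerreL (m : ℕ) (x : ℝ) :
    x * deriv (laguerreL m a) x =
      (m + 1) * laguerreL (m + 1) a x + (x - (m + 1) - a) * laguerreL m a x := by
  linear_combination mul_deriv_laguerreL_succ a m x - x * deriv_laguerreL_succ a m x

end

theorem laguerre_sq_mixed (a β ν : ℝ) (n : ℕ) (hn : 1 ≤ n) (r : ℝ) :
    -(n : ℝ) * r * deriv (fun s => laguerreL n (2 * ν) (2 * a * β * s) ^ 2) r +
      2 * (n : ℝ) ^ 2 * laguerreL n (2 * ν) (2 * a * β * r) ^ 2 +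
      (-(n : ℝ) * r - 2 * ν * r) *
        deriv (fun s => laguerreL (n - 1) (2 * ν) (2 * a * β * s) ^ 2) r +
      (4 * a * β * (n : ℝ) * r + 8 * a * β * ν * r - 8 * ν ^ 2 - 2 * (n : ℝ) ^ 2
        - 8 * ν * (n : ℝ)) * laguerreL (n - 1) (2 * ν) (2 * a * β * r) ^ 2 = 0 := by
  obtain ⟨m, rfl⟩ : ∃ m, n = m + 1 := ⟨n - 1, by omega⟩
  rw [Nat.add_sub_cancel]
  set x := 2 * a * β * r
  have hd₁ := mul_deriv_sq_comp_const_mul (hasDerivAt_laguerreL (2 * ν) (m + 1) x).differentiableAt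
  have hd₀ := mul_deriv_sq_comp_const_mul (hasDerivAt_laguerreL (2 * ν) m x).differentiableAt
  have hA := mul_deriv_laguerreL_succ (2 * ν) m x
  have hB := mul_deriv_laguerreL (2 * ν) m x
  push_cast
  linear_combination (-(m + 1 : ℝ)) * hd₁ + (-(m + 1 : ℝ) - 2 * ν) * hd₀
    - 2 * (m + 1) * laguerreL (m + 1) (2 * ν) x * hA
    - 2 * (m + 1 + 2 * ν) * laguerreL m (2 * ν) x * hB
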